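/- arXiv:2503.16327 — 7 statements merged into one kernel-verified Lean document; each statement's English description precedes it below -/
import Mathlib

section
/- Let ψ be Fibonacci-supported and suppose H1 ψ = λ ψ for some λ ∈ ℂ. Then ψ is an exact eigenstate of the periodic PXP Hamiltonian with the same eigenvalue: H_PXP ψ = λ ψ. -/
open Finset

/-- Flip the bit at site `i`. -/
def flipSite {L : ℕ} (i : ZMod L) (c : ZMod L → Fin 2) : ZMod L → Fin 2 :=
  Function.update c i (1 - c i)

/-- The PXP Hamiltonian with periodic boundary conditions:
`(H_PXP ψ)(c) = Σ_i [c(i−1) = 0 ∧ c(i+1) = 0] ψ(flip_i c)`. -/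
noncomputable def HPXP {L : ℕ} [NeZero L] (ψ : (ZMod L → Fin 2) → ℂ) (c : ZMod L → Fin 2) : ℂ :=
  ∑ i : ZMod L, if c (i - 1) = 0 ∧ c (i + 1) = 0 then ψ (flipSite i c) else 0

/-- The partner of site `i` in its two-site block `{2j, 2j+1}`. -/
def partner {L : ℕ} [NeZero L] (i : ZMod L) : ZMod L :=
  if i.val % 2 = 0 then i + 1 else i - 1

/-- The one-body operator: `(H1 ψ)(c) = Σ_i [c(p(i)) = 0] ψ(flip_i c)`. -/
noncomputable def H1 {L : ℕ} [NeZero L] (ψ : (ZMod L → Fin 2) → ℂ) (c : ZMod L → Fin 2) : ℂ :=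
  ∑ i : ZMod L, if c (partner i) = 0 then ψ (flipSite i c) else 0

/-- `ψ` vanishes on all configurations with two adjacent excitations. -/
def FibSupported {L : ℕ} (ψ : (ZMod L → Fin 2) → ℂ) : Prop :=
  ∀ c : ZMod L → Fin 2, (∃ i : ZMod L, c i = 1 ∧ c (i + 1) = 1) → ψ c = 0

/-- a Fibonacci-supported eigenstate of `H1` is an eigenstate of
the periodic PXP Hamiltonian with the same eigenvalue. -/
theorem fib_H1_eigenstate_is_PXP_eigenstate
    (Lb : ℕ) (hLb : 2 ≤ Lb) [NeZero (2 * Lb)]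
    (ψ : (ZMod (2 * Lb) → Fin 2) → ℂ) (lam : ℂ)
    (hFib : FibSupported ψ)
    (hH1 : ∀ c, H1 ψ c = lam * ψ c) :
    ∀ c, HPXP ψ c = lam * ψ c := by
  intro c
  haveI : Fact (1 < 2 * Lb) := ⟨by omega⟩
  have hne : (1 : ZMod (2 * Lb)) ≠ 0 := one_ne_zero
  have hadd : ∀ i : ZMod (2 * Lb), i + 1 ≠ i := by
    intro i h; exact hne (by rwa [add_eq_left] at h)
  have hsub : ∀ i : ZMod (2 * Lb), i - 1 ≠ i := by
    intro i h; exact hne (by rwa [sub_eq_self] at h)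
  have hfin : ∀ x : Fin 2, x ≠ 0 → x = 1 := by decide
  by_cases hc : ∃ j : ZMod (2 * Lb), c j = 1 ∧ c (j + 1) = 1
  · obtain ⟨j, hj1, hj2⟩ := hc
    rw [hFib c ⟨j, hj1, hj2⟩, mul_zero]
    unfold HPXP
    apply Finset.sum_eq_zero
    intro i _
    split
    · next h =>
      have hij : i ≠ j := by rintro rfl; rw [hj2] at h; exact absurd h.2 (by simp)
      have hij1 : i ≠ j + 1 := by
        rintro rfl
        rw [add_sub_cancel_right, hj1] at h
        exact absurd h.1 (by simp)
      apply hFib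
      refine ⟨j, ?_, ?_⟩
      · rw [flipSite, Function.update_of_ne (Ne.symm hij)]; exact hj1
      · rw [flipSite, Function.update_of_ne (Ne.symm hij1)]; exact hj2
    · rfl
  · push_neg at hc
    rw [← hH1 c]
    unfold HPXP H1
    apply Finset.sum_congr rfl
    intro i _
    have hpart : partner i = i + 1 ∨ partner i = i - 1 := by
      unfold partner; split
      · exact Or.inl rfl
      · exact Or.inr rfl
    by_cases h : c (i - 1) = 0 ∧ c (i + 1) = 0
    · rw [if_pos h, if_pos (by rcases hpart with h' | h' <;> rw [h'] <;>
        [exact h.2; exact h.1])]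
    · rw [if_neg h]
      split
      · next hp =>
        have hni : c i = 0 := by
          by_contra hci
          have hci1 : c i = 1 := hfin _ hci
          rcases not_and_or.mp h with h' | h'
          · exact hc (i - 1) (hfin _ h') (by rwa [sub_add_cancel])
          · exact hc i hci1 (hfin _ h')
        symm
        apply hFib
        rcases not_and_or.mp h with h' | h'
        · refine ⟨i - 1, ?_, ?_⟩
          · rw [flipSite, Function.update_of_ne (hsub i)]; exact hfin _ h'
          · rw [sub_add_cancel, flipSite, Function.update_self, hni]; decide
        · refine ⟨i, ?_, ?_⟩
          · rw [flipSite, Function.update_self, hni]; decide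
          · rw [flipSite, Function.update_of_ne (hadd i)]; exact hfin _ h'
      · rfl
end

section
/- Let ψ be Fibonacci-supported and suppose H1 ψ = λ ψ for some λ ∈ ℂ. Then ψ is annihilated by H2 := H_PXP − H1, i.e. H_PXP ψ − H1 ψ = 0. -/
open Finset

lemma fin2_ne_zero (a : Fin 2) (h : a ≠ 0) : a = 1 := by omega

/-- a Fibonacci-supported eigenstate of `H1` is annihilated by
`H2 = H_PXP − H1`. -/
theorem fib_H1_eigenstate_annihilated_by_H2
    (Lb : ℕ) (hLb : 2 ≤ Lb) [NeZero (2 * Lb)]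
    (ψ : (ZMod (2 * Lb) → Fin 2) → ℂ) (lam : ℂ)
    (hFib : FibSupported ψ)
    (hH1 : ∀ c, H1 ψ c = lam * ψ c) :
    ∀ c, HPXP ψ c - H1 ψ c = 0 := by
  haveI : Fact (1 < 2 * Lb) := ⟨by omega⟩
  have hone : (1 : ZMod (2 * Lb)) ≠ 0 := one_ne_zero
  have hsucc : ∀ i : ZMod (2 * Lb), i + 1 ≠ i := by
    intro i h; exact hone (by linear_combination h)
  have hpred : ∀ i : ZMod (2 * Lb), i - 1 ≠ i := by
    intro i h; exact hone (by linear_combination -h)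
  intro c
  by_cases hF : ∃ i : ZMod (2 * Lb), c i = 1 ∧ c (i + 1) = 1
  · have hψ : ψ c = 0 := hFib c hF
    have h1 : H1 ψ c = 0 := by rw [hH1, hψ, mul_zero]
    have hp : HPXP ψ c = 0 := by
      obtain ⟨j, hj, hj1⟩ := hF
      apply Finset.sum_eq_zero
      intro i _
      split_ifs with h
      · apply hFib
        refine ⟨j, ?_, ?_⟩
        · have hij : j ≠ i := by
            intro he; rw [← he] at h
            rw [hj1] at h; exact absurd h.2 (by decide)
          simpa [flipSite, Function.update_of_ne hij] using hj
        · have hij : j + 1 ≠ i := by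
            intro he; rw [← he] at h
            rw [show j + 1 - 1 = j from by ring, hj] at h
            exact absurd h.1 (by decide)
          simpa [flipSite, Function.update_of_ne hij] using hj1
      · rfl
    rw [hp, h1, sub_zero]
  · push_neg at hF
    rw [sub_eq_zero]
    apply Finset.sum_congr rfl
    intro i _
    by_cases h2 : c (i - 1) = 0 ∧ c (i + 1) = 0
    · rw [if_pos h2, if_pos]
      unfold partner
      split_ifs
      · exact h2.2
      · exact h2.1
    · rw [if_neg h2]
      by_cases hpart : c (partner i) = 0
      · rw [if_pos hpart]
        symm
        unfold partner at hpart
        by_cases hpar : i.val % 2 = 0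
        · rw [if_pos hpar] at hpart
          -- c (i+1) = 0, so c (i-1) = 1
          have hcm : c (i - 1) = 1 := by
            apply fin2_ne_zero
            intro h0
            exact h2 ⟨h0, hpart⟩
          have hci : c i = 0 := by
            by_contra hci
            have : c i = 1 := fin2_ne_zero _ hci
            have := hF (i - 1) hcm
            rw [show i - 1 + 1 = i from by ring] at this
            exact this ‹c i = 1›
          apply hFib
          refine ⟨i - 1, ?_, ?_⟩
          · simpa [flipSite, Function.update_of_ne (hpred i)] using hcm
          · rw [show i - 1 + 1 = i from by ring]
            simp [flipSite, hci]
        · rw [if_neg hpar] at hpart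
          have hcp : c (i + 1) = 1 := by
            apply fin2_ne_zero
            intro h0
            exact h2 ⟨hpart, h0⟩
          have hci : c i = 0 := by
            by_contra hci
            exact hF i (fin2_ne_zero _ hci) hcp
          apply hFib
          refine ⟨i, ?_, ?_⟩
          · simp [flipSite, hci]
          · simpa [flipSite, Function.update_of_ne (hsucc i)] using hcp
      · rw [if_neg hpart]
end

section
/- Suppose there exists a d×d complex matrix X with [X, M^s] = F^s for every s ∈ S. Then for every n ≥ 1 and every word (s_1, …, s_n) ∈ S^n, the sum of all insertion amplitudes vanishes: Σ_{k=1}^{n} Tr(M^{s_1} ⋯ M^{s_{k−1}} · F^{s_k} · M^{s_{k+1}} ⋯ M^{s_n}) = 0. (This is the periodic-boundary part of Theorem 1: a translationally invariant MPS whose tensors satisfy the commutator conditions is annihilated by the on-site Hamiltonian.) -/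
open Matrix

/-- PBC part of Theorem 1: if there is a matrix `X` with
`[X, M^s] = F^s` for all letters `s`, then for every word the sum of all
insertion amplitudes (trace with one defect `F` inserted) vanishes. -/
theorem trace_insertion_sum_eq_zero_of_commutator
    (d : ℕ) (hd : 1 ≤ d) (S : Type) [Fintype S]
    (M F : S → Matrix (Fin d) (Fin d) ℂ)
    (X : Matrix (Fin d) (Fin d) ℂ)
    (hX : ∀ s : S, X * M s - M s * X = F s)
    (n : ℕ) (hn : 1 ≤ n) (s : Fin n → S) :
    ∑ k : Fin n,
      Matrix.trace ((List.ofFn fun j : Fin n =>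
        if j = k then F (s j) else M (s j)).prod) = 0 := by
  classical
  set L : List (Matrix (Fin d) (Fin d) ℂ) := List.ofFn (fun j : Fin n => M (s j)) with hL
  have hLlen : L.length = n := by simp [hL]
  set g : ℕ → ℂ := fun k => Matrix.trace ((L.take k).prod * X * (L.drop k).prod) with hg
  have hterm : ∀ k : Fin n,
      Matrix.trace ((List.ofFn fun j : Fin n =>
        if j = k then F (s j) else M (s j)).prod) = g k - g ((k : ℕ) + 1) := by
    intro k
    have hk : (k : ℕ) < L.length := by rw [hLlen]; exact k.isLt
    have hsplit : (List.ofFn fun j : Fin n => if j = k then F (s j) else M (s j))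
        = L.take k ++ F (s k) :: L.drop ((k : ℕ) + 1) := by
      have : (List.ofFn fun j : Fin n => if j = k then F (s j) else M (s j))
          = L.set k (F (s k)) := by
        apply List.ext_getElem
        · simp [hLlen]
        · intro i h1 h2
          rw [List.getElem_ofFn, List.getElem_set]
          have hi : i < n := by simpa using h1
          by_cases h : i = (k : ℕ)
          · have : (⟨i, hi⟩ : Fin n) = k := Fin.ext h
            simp [h, this]
          · have : (⟨i, hi⟩ : Fin n) ≠ k := fun hc => h (by simpa using congrArg Fin.val hc)
            simp [this, hL, if_neg (Ne.symm h)]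
      rw [this, List.set_eq_take_append_cons_drop, if_pos hk]
    have hdrop : L.drop (k : ℕ) = M (s k) :: L.drop ((k : ℕ) + 1) := by
      rw [List.drop_eq_getElem_cons hk]
      congr 1
      simp [hL]
    have htake : L.take ((k : ℕ) + 1) = L.take k ++ [M (s k)] := by
      rw [List.take_succ]
      have : L[(k : ℕ)]? = some (M (s k)) := by
        rw [List.getElem?_eq_getElem hk]; simp [hL]
      simp [this]
    rw [hsplit]
    simp only [List.prod_append, List.prod_cons, hg, hdrop, htake, ← hX (s k)]
    simp only [mul_sub, sub_mul, Matrix.trace_sub, List.prod_append, List.prod_cons,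
      List.prod_singleton, List.prod_nil, mul_assoc, mul_one, one_mul]
  rw [Finset.sum_congr rfl (fun k _ => hterm k), Fin.sum_univ_eq_sum_range (fun i => g i - g (i+1)) n,
    Finset.sum_range_sub' g n]
  have h0 : g 0 = Matrix.trace (X * L.prod) := by simp [hg]
  have hn' : g n = Matrix.trace (L.prod * X) := by simp [hg, ← hLlen]
  rw [h0, hn', Matrix.trace_mul_comm, sub_self]
end

section
/- Suppose there exists a d×d complex matrix X with [X, M^s] = F^s for every s ∈ S, and let v, w ∈ ℂ^d satisfy vᵀ X = λ_v vᵀ and X w = λ_w w for scalars λ_v, λ_w. Then for every n ≥ 1 and every word (s_1, …, s_n) ∈ S^n, Σ_{k=1}^{n} vᵀ M^{s_1} ⋯ M^{s_{k−1}} F^{s_k} M^{s_{k+1}} ⋯ M^{s_n} w = (λ_v − λ_w) · vᵀ M^{s_1} ⋯ M^{s_n} w. (This is the open-boundary part of Theorem 1: the MPS with these boundary terminations is an eigenstate of the on-site Hamiltonian with eigenvalue λ_v − λ_w.) -/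
/-! Since `F^s = [X, M^s]` and `[X, ·]` is a derivation, the Leibniz rule turns the sum of
insertions into `[X, M^{s₁} ⋯ M^{sₙ}]`; between the eigenvectors `vᵀ` and `w` the commutator
`[X, P]` evaluates to `(λ_v − λ_w) vᵀ P w`. -/

open Matrix

theorem sum_prod_ofFn_ite_commutator {R : Type*} [Ring R] (X : R) :
    ∀ {n : ℕ} (a : Fin n → R),
      ∑ k : Fin n, (List.ofFn fun j => if j = k then X * a j - a j * X else a j).prod
        = X * (List.ofFn a).prod - (List.ofFn a).prod * X
  | 0, _ => by simp
  | n + 1, a => by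
    have head : (List.ofFn fun j : Fin (n + 1) => if j = 0 then X * a j - a j * X else a j).prod
        = (X * a 0 - a 0 * X) * (List.ofFn fun i : Fin n => a i.succ).prod := by
      simp [List.ofFn_succ, Fin.succ_ne_zero]
    have tail (k : Fin n) :
        (List.ofFn fun j : Fin (n + 1) => if j = k.succ then X * a j - a j * X else a j).prod
          = a 0 * (List.ofFn fun i : Fin n =>
              if i = k then X * a i.succ - a i.succ * X else a i.succ).prod := by
      simp [List.ofFn_succ, (Fin.succ_ne_zero k).symm]
    rw [Fin.sum_univ_succ, head, Finset.sum_congr rfl fun k _ => tail k, ← Finset.mul_sum,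
      sum_prod_ofFn_ite_commutator X fun i => a i.succ, List.ofFn_succ, List.prod_cons]
    noncomm_ring

theorem dotProduct_commutator_mulVec_of_eigenvectors {ι R : Type*} [Fintype ι] [DecidableEq ι]
    [CommRing R] {X : Matrix ι ι R} {v w : ι → R} {lv lw : R}
    (hv : v ᵥ* X = lv • v) (hw : X *ᵥ w = lw • w) (P : Matrix ι ι R) :
    v ⬝ᵥ (X * P - P * X) *ᵥ w = (lv - lw) * (v ⬝ᵥ P *ᵥ w) := by
  have left : v ⬝ᵥ (X * P) *ᵥ w = lv * (v ⬝ᵥ P *ᵥ w) := by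
    rw [dotProduct_mulVec, ← vecMul_vecMul, hv, smul_vecMul, smul_dotProduct,
      ← dotProduct_mulVec, smul_eq_mul]
  have right : v ⬝ᵥ (P * X) *ᵥ w = lw * (v ⬝ᵥ P *ᵥ w) := by
    rw [← mulVec_mulVec, hw, mulVec_smul, dotProduct_smul, smul_eq_mul]
  rw [sub_mulVec, dotProduct_sub, left, right, sub_mul]

theorem boundary_insertion_sum_eq_eigenvalue_mul_general
    (d : ℕ) (S : Type)
    (M F : S → Matrix (Fin d) (Fin d) ℂ)
    (X : Matrix (Fin d) (Fin d) ℂ)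
    (hX : ∀ s : S, X * M s - M s * X = F s)
    (v w : Fin d → ℂ) (lv lw : ℂ)
    (hv : Matrix.vecMul v X = lv • v)
    (hw : Matrix.mulVec X w = lw • w)
    (n : ℕ) (s : Fin n → S) :
    ∑ k : Fin n,
      v ⬝ᵥ Matrix.mulVec ((List.ofFn fun j : Fin n =>
        if j = k then F (s j) else M (s j)).prod) w
    = (lv - lw) * (v ⬝ᵥ Matrix.mulVec ((List.ofFn fun j : Fin n => M (s j)).prod) w) := by
  simp only [← hX]
  rw [← dotProduct_sum, ← sum_mulVec, sum_prod_ofFn_ite_commutator X fun j => M (s j)]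
  exact dotProduct_commutator_mulVec_of_eigenvectors hv hw _

/-- OBC part of Theorem 1: if `[X, M^s] = F^s` for all letters `s`
and the boundary vectors `v, w` are left/right eigenvectors of `X` with
eigenvalues `λ_v, λ_w`, then for every word the sum of boundary insertion
amplitudes equals `(λ_v − λ_w)` times the plain amplitude. -/
theorem boundary_insertion_sum_eq_eigenvalue_mul
    (d : ℕ) (hd : 1 ≤ d) (S : Type) [Fintype S]
    (M F : S → Matrix (Fin d) (Fin d) ℂ)
    (X : Matrix (Fin d) (Fin d) ℂ)
    (hX : ∀ s : S, X * M s - M s * X = F s)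
    (v w : Fin d → ℂ) (lv lw : ℂ)
    (hv : Matrix.vecMul v X = lv • v)
    (hw : Matrix.mulVec X w = lw • w)
    (n : ℕ) (hn : 1 ≤ n) (s : Fin n → S) :
    ∑ k : Fin n,
      v ⬝ᵥ Matrix.mulVec ((List.ofFn fun j : Fin n =>
        if j = k then F (s j) else M (s j)).prod) w
    = (lv - lw) * (v ⬝ᵥ Matrix.mulVec ((List.ofFn fun j : Fin n => M (s j)).prod) w) :=
  boundary_insertion_sum_eq_eigenvalue_mul_general d S M F X hX v w lv lw hv hw n s
end

section
/- Let P, Q ≥ 0 be integers, X a d×d complex matrix, n > P + Q + 1, and s : ZMod n → S a cyclic word such that for every k ∈ ZMod n the padded defect condition holds: M^{s_{k−P}} · M^{s_{k−P+1}} ⋯ M^{s_{k−1}} · ([X, M^{s_k}] − F^{s_k}) · M^{s_{k+1}} ⋯ M^{s_{k+Q}} = 0 (all indices taken mod n). Then the sum of all cyclic insertion amplitudes vanishes: Σ_{k ∈ ZMod n} Tr(F^{s_k} · M^{s_{k+1}} ⋯ M^{s_{k+n−1}}) = 0. -/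
open Matrix

lemma ofFn_nat_eq {α : Type*} {a b : ℕ} (h : a = b) (f : ℕ → α) :
    (List.ofFn fun i : Fin a => f i) = List.ofFn fun i : Fin b => f i := by
  subst h; rfl

lemma prod_split3 {α : Type*} [Monoid α] (q m p : ℕ) (f : ℕ → α) :
    (List.ofFn fun j : Fin (q + m + p) => f (j : ℕ)).prod =
      (List.ofFn fun j : Fin q => f (j : ℕ)).prod *
      (List.ofFn fun j : Fin m => f (q + (j : ℕ))).prod *
      (List.ofFn fun j : Fin p => f (q + m + (j : ℕ))).prod := by
  rw [List.ofFn_add, List.prod_append, List.ofFn_add, List.prod_append]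
  simp [Fin.coe_castAdd, Fin.coe_natAdd]

lemma ofFn_prod_congr {α : Type*} [Monoid α] {n : ℕ} {f g : Fin n → α}
    (h : ∀ i, f i = g i) : (List.ofFn f).prod = (List.ofFn g).prod := by
  rw [funext h]

lemma prod_split_cyc {α : Type*} [Monoid α] {n : ℕ} (P Q m : ℕ)
    (hmn : n - 1 = Q + m + P) (hn : n = Q + m + P + 1)
    (u : ZMod n → α) (k : ZMod n) :
    (List.ofFn fun j : Fin (n - 1) => u (k + 1 + ((j : ℕ) : ZMod n))).prod =
      (List.ofFn fun b : Fin Q => u (k + 1 + ((b : ℕ) : ZMod n))).prod *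
      (List.ofFn fun c : Fin m => u (k + 1 + (Q : ZMod n) + ((c : ℕ) : ZMod n))).prod *
      (List.ofFn fun a : Fin P => u (k - (P : ZMod n) + ((a : ℕ) : ZMod n))).prod := by
  rw [ofFn_nat_eq hmn (fun t : ℕ => u (k + 1 + (t : ZMod n))),
    prod_split3 Q m P (fun t : ℕ => u (k + 1 + (t : ZMod n)))]
  congr 1
  · congr 1
    refine ofFn_prod_congr (fun c => ?_)
    refine congrArg u ?_
    push_cast
    ring
  · refine ofFn_prod_congr (fun a => ?_)
    refine congrArg u ?_
    have h0 : ((Q + m + P + 1 : ℕ) : ZMod n) = 0 := by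
      rw [← hn]; exact ZMod.natCast_self n
    push_cast at h0 ⊢
    linear_combination h0

lemma cycle_step {α : Type*} [Monoid α] {n : ℕ} [NeZero n] (u : ZMod n → α) (k : ZMod n) :
    (List.ofFn fun j : Fin (n - 1) => u (k + 1 + ((j : ℕ) : ZMod n))).prod * u k
    = u (k + 1) * (List.ofFn fun j : Fin (n - 1) => u (k + 1 + 1 + ((j : ℕ) : ZMod n))).prod := by
  have h1 : 1 ≤ n := Nat.one_le_iff_ne_zero.mpr (NeZero.ne n)
  have hn1 : n = (n - 1) + 1 := by omega
  have e1 : (List.ofFn fun j : Fin n => u (k + 1 + ((j : ℕ) : ZMod n))).prod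
      = (List.ofFn fun j : Fin (n - 1) => u (k + 1 + ((j : ℕ) : ZMod n))).prod * u k := by
    rw [ofFn_nat_eq hn1 (fun t : ℕ => u (k + 1 + (t : ZMod n))), List.ofFn_succ',
      List.prod_concat]
    congr 1
    · refine congrArg u ?_
      have hne : ((n - 1 : ℕ) : ZMod n) = -1 := by
        rw [Nat.cast_sub h1, ZMod.natCast_self n]
        simp
      rw [Fin.val_last, hne]
      ring
  have e2 : (List.ofFn fun j : Fin n => u (k + 1 + ((j : ℕ) : ZMod n))).prod
      = u (k + 1) * (List.ofFn fun j : Fin (n - 1) => u (k + 1 + 1 + ((j : ℕ) : ZMod n))).prod := by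
    rw [ofFn_nat_eq hn1 (fun t : ℕ => u (k + 1 + (t : ZMod n))), List.ofFn_succ,
      List.prod_cons]
    congr 1
    · exact congrArg u (by simp)
    · refine ofFn_prod_congr (fun i => ?_)
      refine congrArg u ?_
      rw [Fin.val_succ]
      push_cast
      ring
  rw [← e1, e2]

/-- Theorem 4, PBC part: if for every position `k` of a cyclic
word the padded defect condition
`M^{s_{k−P}} ⋯ M^{s_{k−1}} ([X, M^{s_k}] − F^{s_k}) M^{s_{k+1}} ⋯ M^{s_{k+Q}} = 0`
holds, then the sum of all cyclic insertion amplitudes vanishes. -/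
theorem cyclic_insertion_sum_eq_zero_of_padded_defect
    (d : ℕ) (hd : 1 ≤ d) (S : Type) [Fintype S]
    (M F : S → Matrix (Fin d) (Fin d) ℂ)
    (P Q : ℕ) (X : Matrix (Fin d) (Fin d) ℂ)
    (n : ℕ) [NeZero n] (hn : P + Q + 1 < n)
    (s : ZMod n → S)
    (hpad : ∀ k : ZMod n,
      (List.ofFn fun a : Fin P => M (s (k - (P : ZMod n) + ((a : ℕ) : ZMod n)))).prod *
        (X * M (s k) - M (s k) * X - F (s k)) *
      (List.ofFn fun b : Fin Q => M (s (k + 1 + ((b : ℕ) : ZMod n)))).prod = 0) :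
    ∑ k : ZMod n,
      Matrix.trace (F (s k) *
        (List.ofFn fun j : Fin (n - 1) =>
          M (s (k + 1 + ((j : ℕ) : ZMod n)))).prod) = 0 := by
  have alg : ∀ (D R C L : Matrix (Fin d) (Fin d) ℂ), L * D * R = 0 →
      Matrix.trace (D * (R * C * L)) = 0 := by
    intro D R C L h
    rw [show D * (R * C * L) = (D * (R * C)) * L from by noncomm_ring,
      Matrix.trace_mul_comm,
      show L * (D * (R * C)) = (L * D * R) * C from by noncomm_ring,
      h, zero_mul, Matrix.trace_zero]
  have key : ∀ k : ZMod n,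
      Matrix.trace (F (s k) *
        (List.ofFn fun j : Fin (n - 1) => M (s (k + 1 + ((j : ℕ) : ZMod n)))).prod)
      = (fun k : ZMod n => Matrix.trace (X * (M (s k) *
          (List.ofFn fun j : Fin (n - 1) => M (s (k + 1 + ((j : ℕ) : ZMod n)))).prod))) k
        - (fun k : ZMod n => Matrix.trace (X * (M (s k) *
          (List.ofFn fun j : Fin (n - 1) => M (s (k + 1 + ((j : ℕ) : ZMod n)))).prod))) (k + 1) := by
    intro k
    simp only
    have hsplit := prod_split_cyc P Q (n - 1 - Q - P) (by omega) (by omega)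
      (fun t => M (s t)) k
    have hdef : Matrix.trace ((X * M (s k) - M (s k) * X - F (s k)) *
        (List.ofFn fun j : Fin (n - 1) => M (s (k + 1 + ((j : ℕ) : ZMod n)))).prod) = 0 := by
      rw [hsplit]
      exact alg _ _ _ _ (hpad k)
    have hcyc := cycle_step (fun t => M (s t)) k
    have h2 : Matrix.trace (M (s k) * X *
        (List.ofFn fun j : Fin (n - 1) => M (s (k + 1 + ((j : ℕ) : ZMod n)))).prod)
        = Matrix.trace (X * (M (s (k + 1)) *
        (List.ofFn fun j : Fin (n - 1) => M (s (k + 1 + 1 + ((j : ℕ) : ZMod n)))).prod)) := by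
      rw [mul_assoc, Matrix.trace_mul_comm, mul_assoc, hcyc]
    rw [sub_mul, sub_mul, Matrix.trace_sub, Matrix.trace_sub] at hdef
    rw [h2] at hdef
    have : k + 1 + 1 = k + 1 + 1 := rfl
    simp only [mul_assoc] at hdef ⊢
    linear_combination -hdef
  rw [Finset.sum_congr rfl (fun k _ => key k), Finset.sum_sub_distrib, sub_eq_zero]
  exact Fintype.sum_equiv (Equiv.subRight (1 : ZMod n)) _ _ (fun k => by simp)
end

section
/- Let M^0, M^1 be d×d complex matrices with M^1 M^1 = 0, and suppose there exists a d×d complex matrix X with [X, M^0] = M^1 and M^0 [X, M^1] M^0 = (M^0)^3. Then for every n > 3 and every Rydberg-allowed cyclic word s : ZMod n → {0, 1}, the sum of all cyclic insertion amplitudes vanishes: Σ_{k ∈ ZMod n} Tr(F^{s_k} · M^{s_{k+1}} ⋯ M^{s_{k+n−1}}) = 0. -/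
open Matrix

/-- Corollary 5, Rydberg basis: if `M^1 M^1 = 0`,
`[X, M^0] = M^1` and `M^0 [X, M^1] M^0 = (M^0)^3`, then for every `n > 3` and
every Rydberg-allowed cyclic word the sum of all cyclic insertion amplitudes
(with defects `F^0 = M^1`, `F^1 = M^0`) vanishes. -/
theorem cyclic_insertion_sum_eq_zero_Rydberg
    (d : ℕ) (hd : 1 ≤ d)
    (M0 M1 : Matrix (Fin d) (Fin d) ℂ)
    (hnil : M1 * M1 = 0)
    (X : Matrix (Fin d) (Fin d) ℂ)
    (h0 : X * M0 - M0 * X = M1)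
    (h1 : M0 * (X * M1 - M1 * X) * M0 = M0 ^ 3)
    (n : ℕ) [NeZero n] (hn : 3 < n)
    (s : ZMod n → Fin 2)
    (hallow : ¬ ∃ k : ZMod n, s k = 1 ∧ s (k + 1) = 1) :
    ∑ k : ZMod n,
      Matrix.trace ((![M1, M0]) (s k) *
        (List.ofFn fun j : Fin (n - 1) =>
          (![M0, M1]) (s (k + 1 + ((j : ℕ) : ZMod n)))).prod) = 0 := by
  obtain ⟨m, rfl⟩ : ∃ m, n = m + 1 + 1 + 1 + 1 := ⟨n - 4, by omega⟩
  have fin2 : ∀ b : Fin 2, b ≠ 1 → b = 0 := by decide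
  have fin2' : ∀ b : Fin 2, b = 0 ∨ b = 1 := by decide
  push_neg at hallow
  have hallow' : ∀ k : ZMod (m+1+1+1+1), s k = 1 → s (k+1) = 0 ∧ s (k-1) = 0 := by
    intro k hk
    refine ⟨fin2 _ (hallow k hk), fin2 _ fun h => ?_⟩
    have := hallow (k-1) h
    rw [sub_add_cancel] at this
    exact this hk
  set Q : ZMod (m+1+1+1+1) → Matrix (Fin d) (Fin d) ℂ :=
    fun k => (List.ofFn fun j : Fin (m+1+1+1+1) =>
      (![M0, M1]) (s (k + ((j : ℕ) : ZMod (m+1+1+1+1))))).prod with hQdef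
  set R : ZMod (m+1+1+1+1) → Matrix (Fin d) (Fin d) ℂ :=
    fun k => (List.ofFn fun j : Fin (m+1+1+1) =>
      (![M0, M1]) (s (k + 1 + ((j : ℕ) : ZMod (m+1+1+1+1))))).prod with hRdef
  have main : ∀ (A : Matrix (Fin d) (Fin d) ℂ) (k : ZMod (m+1+1+1+1)),
      Q k = A * R k → Q (k+1) = R k * A →
      Matrix.trace ((X * A - A * X) * R k)
        = Matrix.trace (X * Q k) - Matrix.trace (X * Q (k+1)) := by
    intro A k e1 e2
    simp only [sub_mul, Matrix.trace_sub, e1, e2, mul_assoc]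
    rw [Matrix.trace_mul_comm A (X * R k)]
    simp only [mul_assoc]
  have key : ∀ k : ZMod (m+1+1+1+1),
      Matrix.trace ((![M1, M0]) (s k) * R k)
        = Matrix.trace (X * Q k) - Matrix.trace (X * Q (k+1)) := by
    intro k
    have hQk : Q k = (![M0, M1]) (s k) * R k := by
      simp only [hQdef, hRdef]
      rw [List.ofFn_succ, List.prod_cons]
      refine congrArg₂ (· * ·) ?_
        (congrArg (fun f : Fin (m+1+1+1) → Matrix (Fin d) (Fin d) ℂ => (List.ofFn f).prod)
          (funext fun i => ?_))
      · exact congrArg (fun z => (![M0, M1]) (s z)) (by simp)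
      ·
        exact congrArg (fun z => (![M0, M1]) (s z))
          (by rw [Fin.val_succ]; push_cast; ring)
    have hQk1 : Q (k+1) = R k * (![M0, M1]) (s k) := by
      simp only [hQdef, hRdef]
      rw [List.ofFn_succ', List.prod_concat]
      refine congrArg₂ (· * ·)
        (congrArg (fun f : Fin (m+1+1+1) → Matrix (Fin d) (Fin d) ℂ => (List.ofFn f).prod)
          (funext fun i => ?_)) ?_
      · exact congrArg (fun z => (![M0, M1]) (s z)) (by rw [Fin.coe_castSucc])
      · refine congrArg (fun z => (![M0, M1]) (s z)) ?_
        rw [Fin.val_last]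
        have h4 := ZMod.natCast_self (m+1+1+1+1)
        push_cast at h4 ⊢
        linear_combination h4
    rcases fin2' (s k) with hk | hk
    · rw [hk] at hQk hQk1 ⊢
      simp only [Matrix.cons_val_zero, Matrix.cons_val_one, Matrix.head_cons] at hQk hQk1 ⊢
      rw [← h0]
      exact main M0 k hQk hQk1
    · rw [hk] at hQk hQk1 ⊢
      simp only [Matrix.cons_val_zero, Matrix.cons_val_one, Matrix.head_cons] at hQk hQk1 ⊢
      obtain ⟨hk1, hk2⟩ := hallow' k hk
      obtain ⟨W, hW⟩ : ∃ W, R k = M0 * (W * M0) := by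
        refine ⟨(List.ofFn fun i : Fin (m+1) => (![M0, M1])
          (s (k + 1 + ((((i.castSucc).succ : Fin (m+1+1+1)) : ℕ) : ZMod (m+1+1+1+1))))).prod, ?_⟩
        simp only [hRdef]
        rw [List.ofFn_succ, List.ofFn_succ', List.prod_cons, List.prod_concat]
        refine congrArg₂ (· * ·) ?_ (congrArg₂ (· * ·) rfl ?_)
        · have ha : k + 1 + (((0 : Fin (m+1+1+1)) : ℕ) : ZMod (m+1+1+1+1)) = k + 1 := by
            simp
          rw [ha, hk1]
          simp
        · have hb : k + 1 + ((((Fin.last (m+1)).succ : ℕ)) : ZMod (m+1+1+1+1))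
              = k - 1 := by
            rw [Fin.val_succ, Fin.val_last]
            have h4 := ZMod.natCast_self (m+1+1+1+1)
            push_cast at h4 ⊢
            linear_combination h4
          rw [hb, hk2]
          simp
      have hMDM : M0 * (X * M1 - M1 * X - M0) * M0 = 0 := by
        have e3 : M0 ^ 3 = M0 * M0 * M0 := by rw [pow_succ, pow_two]
        have e4 : M0 * (X * M1 - M1 * X - M0) * M0
            = M0 * (X * M1 - M1 * X) * M0 - M0 * M0 * M0 := by noncomm_ring
        rw [e4, h1, e3, sub_self]
      have hDR : Matrix.trace ((X * M1 - M1 * X - M0) * R k) = 0 := by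
        rw [hW,
          show (X * M1 - M1 * X - M0) * (M0 * (W * M0))
            = ((X * M1 - M1 * X - M0) * M0 * W) * M0 by noncomm_ring,
          Matrix.trace_mul_comm,
          show M0 * ((X * M1 - M1 * X - M0) * M0 * W)
            = (M0 * (X * M1 - M1 * X - M0) * M0) * W by noncomm_ring,
          hMDM, zero_mul, Matrix.trace_zero]
      have hsplit : Matrix.trace (M0 * R k)
          = Matrix.trace ((X * M1 - M1 * X) * R k)
            - Matrix.trace ((X * M1 - M1 * X - M0) * R k) := by
        rw [← Matrix.trace_sub, ← sub_mul]
        congr 2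
        noncomm_ring
      rw [hsplit, hDR, sub_zero]
      exact main M1 k hQk hQk1
  have goal_eq : ∑ k : ZMod (m+1+1+1+1),
      Matrix.trace ((![M1, M0]) (s k) *
        (List.ofFn fun j : Fin (m+1+1+1+1 - 1) =>
          (![M0, M1]) (s (k + 1 + ((j : ℕ) : ZMod (m+1+1+1+1))))).prod)
      = ∑ k : ZMod (m+1+1+1+1), Matrix.trace ((![M1, M0]) (s k) * R k) := rfl
  rw [goal_eq]
  rw [Finset.sum_congr rfl fun k _ => key k]
  rw [Finset.sum_sub_distrib, sub_eq_zero]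
  exact (Fintype.sum_equiv (Equiv.addRight (1 : ZMod (m+1+1+1+1)))
    (fun k => Matrix.trace (X * Q (k+1))) (fun k => Matrix.trace (X * Q k))
    (fun k => rfl)).symm
end

section
/- Let ε ∈ ℂ and suppose there exists a d×d complex matrix X with [X, M^s] = F^s − ε·M^s for every s ∈ S. Then for every n ≥ 1 and every word (s_1, …, s_n) ∈ S^n: (i) Σ_{k=1}^{n} Tr(M^{s_1} ⋯ M^{s_{k−1}} F^{s_k} M^{s_{k+1}} ⋯ M^{s_n}) = n·ε·Tr(M^{s_1} ⋯ M^{s_n}); and (ii) if in addition v, w ∈ ℂ^d satisfy vᵀ X = λ_v vᵀ and X w = λ_w w, then Σ_{k=1}^{n} vᵀ M^{s_1} ⋯ M^{s_{k−1}} F^{s_k} M^{s_{k+1}} ⋯ M^{s_n} w = (n·ε + λ_v − λ_w) · vᵀ M^{s_1} ⋯ M^{s_n} w. (This is the finite-energy-density extension of the telescoping construction underlying Corollary 8 on generalized PSP models, giving eigenstates with energy n·ε in PBC and n·ε + λ_v − λ_w in OBC.) -/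
open Matrix

lemma key_insertion {d : ℕ} {S : Type}
    (M F : S → Matrix (Fin d) (Fin d) ℂ)
    (ε : ℂ) (X : Matrix (Fin d) (Fin d) ℂ)
    (hX : ∀ s : S, X * M s - M s * X = F s - ε • M s) :
    ∀ (n : ℕ) (s : Fin n → S),
      (∑ k : Fin n, (List.ofFn fun j : Fin n =>
          if j = k then F (s j) else M (s j)).prod)
      = X * (List.ofFn fun j : Fin n => M (s j)).prod
        - (List.ofFn fun j : Fin n => M (s j)).prod * X
        + ((n : ℂ) * ε) • (List.ofFn fun j : Fin n => M (s j)).prod := by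
  intro n
  induction n with
  | zero => intro s; simp
  | succ n ih =>
    intro s
    have hF : F (s 0) = X * M (s 0) - M (s 0) * X + ε • M (s 0) := by
      have h := hX (s 0)
      have h2 : F (s 0) - ε • M (s 0) + ε • M (s 0)
          = X * M (s 0) - M (s 0) * X + ε • M (s 0) := by rw [← h]
      simpa using h2
    rw [Fin.sum_univ_succ]
    have h0 : (List.ofFn fun j : Fin (n+1) =>
        if j = 0 then F (s j) else M (s j)).prod
        = F (s 0) * (List.ofFn fun j : Fin n => M (s j.succ)).prod := by
      rw [List.ofFn_succ, List.prod_cons]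
      simp [Fin.succ_ne_zero]
    have hsucc : ∀ i : Fin n, (List.ofFn fun j : Fin (n+1) =>
        if j = i.succ then F (s j) else M (s j)).prod
        = M (s 0) * (List.ofFn fun j : Fin n =>
            if j = i then F (s j.succ) else M (s j.succ)).prod := by
      intro i
      rw [List.ofFn_succ, List.prod_cons]
      simp [(Fin.succ_ne_zero i).symm, Fin.succ_inj]
    simp only [h0, hsucc, ← Finset.mul_sum, ih (fun j => s j.succ)]
    rw [List.ofFn_succ, List.prod_cons]
    set P := (List.ofFn fun j : Fin n => M (s j.succ)).prod
    rw [hF]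
    push_cast
    simp only [mul_add, mul_sub, add_mul, sub_mul, add_smul, one_mul, smul_mul_assoc,
      mul_smul_comm, mul_assoc]
    abel

/-- finite-energy-density telescoping, Corollary 8: if
`[X, M^s] = F^s − ε M^s` for all letters `s`, then for every word
(i) the cyclic insertion-trace sum equals `n ε` times the plain trace, and
(ii) with boundary vectors `v, w` that are left/right eigenvectors of `X`
with eigenvalues `λ_v, λ_w`, the boundary insertion sum equals
`(n ε + λ_v − λ_w)` times the plain boundary amplitude. -/
theorem finite_energy_density_insertion_sums
    (d : ℕ) (hd : 1 ≤ d) (S : Type) [Fintype S]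
    (M F : S → Matrix (Fin d) (Fin d) ℂ)
    (ε : ℂ) (X : Matrix (Fin d) (Fin d) ℂ)
    (hX : ∀ s : S, X * M s - M s * X = F s - ε • M s)
    (n : ℕ) (hn : 1 ≤ n) (s : Fin n → S) :
    (∑ k : Fin n,
      Matrix.trace ((List.ofFn fun j : Fin n =>
        if j = k then F (s j) else M (s j)).prod)
      = (n : ℂ) * ε *
        Matrix.trace ((List.ofFn fun j : Fin n => M (s j)).prod)) ∧
    (∀ (v w : Fin d → ℂ) (lv lw : ℂ),
      Matrix.vecMul v X = lv • v → Matrix.mulVec X w = lw • w →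
      ∑ k : Fin n,
        v ⬝ᵥ Matrix.mulVec ((List.ofFn fun j : Fin n =>
          if j = k then F (s j) else M (s j)).prod) w
      = ((n : ℂ) * ε + lv - lw) *
          (v ⬝ᵥ Matrix.mulVec ((List.ofFn fun j : Fin n => M (s j)).prod) w)) := by
  have key := key_insertion M F ε X hX n s
  set P := (List.ofFn fun j : Fin n => M (s j)).prod with hP
  constructor
  · have h := congrArg Matrix.trace key
    rw [Matrix.trace_sum, Matrix.trace_add, Matrix.trace_sub, Matrix.trace_smul,
      Matrix.trace_mul_comm X P] at h
    simpa using h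
  · intro v w lv lw hv hw
    set φ : Matrix (Fin d) (Fin d) ℂ →+ ℂ :=
      AddMonoidHom.mk' (fun A => v ⬝ᵥ A.mulVec w)
        (fun A B => by simp [Matrix.add_mulVec, dotProduct_add]) with hφ
    have h := congrArg φ key
    rw [map_sum] at h
    simp only [hφ, AddMonoidHom.mk'_apply, Matrix.add_mulVec, Matrix.sub_mulVec,
      Matrix.smul_mulVec, ← Matrix.mulVec_mulVec, dotProduct_add, dotProduct_sub,
      dotProduct_smul, Matrix.dotProduct_mulVec v X, hv, hw, smul_dotProduct,
      Matrix.mulVec_smul, smul_eq_mul] at h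
    rw [h]; ring
end
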